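/- Assume in addition that b_i^1 ≠ 0 for every i. Then for every m ∈ {1,…,n} and every z ∈ ℂ^n: −Σ_{1 ≤ i < j ≤ n} ((z_i b_j^1 − z_j b_i^1)²/(d_{i,j} b_i^1 b_j^1)) v_{i,j} = Σ' (f_{i,j,m}(z)²/(d_{i,j} d_{j,m} d_{m,i})) v_{i,j}, where Σ' is over all pairs i < j with m ∉ {i,j}. In particular the right-hand side is independent of the choice of m. -/

import Mathlib

/-!
Write `g i j` for `pairCoeff b z i j`; it is antisymmetric. For distinct `i, j, m` a
partial-fraction identity gives `f_{i,j,m}² / (d_{i,j} d_{j,m} d_{m,i}) = g i m - g j m - g i j`,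
so, with `u i = g i m` (and `g m m = 0`), the coefficient of `v_{i,j}` in the sum of the two
sides is `u i - u j` for every `i < j`. Such a coboundary pairs to zero against the `v_{i,j}`:
they are antisymmetric in `i, j` and `∑ j, v_{i,j} = 0` because `∑ j, a j / |a| = 1`.
-/

open Finset

/-- `d_{i,j} = b_i^1 b_j^2 − b_i^2 b_j^1`. -/
def dd2 {n : ℕ} (b : Fin n → Fin 2 → ℂ) (i j : Fin n) : ℂ :=
  b i 0 * b j 1 - b i 1 * b j 0

/-- `f_{i,j,k}(z) = d_{j,k} z_i + d_{k,i} z_j + d_{i,j} z_k`. -/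
def ff2 {n : ℕ} (b : Fin n → Fin 2 → ℂ) (z : Fin n → ℂ) (i j k : Fin n) : ℂ :=
  dd2 b j k * z i + dd2 b k i * z j + dd2 b i j * z k

/-- The basis vector `F_{i,j}` of `V` in the coordinate model: an element of
`Fin n → Fin n → ℂ` whose `(i,j)` entry is `1` and `(j,i)` entry is `-1`.
This realizes the relations `F_{j,i} = -F_{i,j}` and `F_{i,i} = 0`. -/
def F2 (n : ℕ) (i j : Fin n) : Fin n → Fin n → ℂ :=
  fun k l => (if k = i ∧ l = j then 1 else 0) - (if k = j ∧ l = i then 1 else 0)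

/-- The space `V` spanned by the `F_{i,j}`: antisymmetric coefficient arrays. -/
noncomputable def skewV2 (n : ℕ) : Submodule ℂ (Fin n → Fin n → ℂ) where
  carrier := {x | ∀ i j, x j i = -x i j}
  add_mem' := by
    intro x y hx hy i j
    simp only [Pi.add_apply, hx i j, hy i j]
    ring
  zero_mem' := by
    intro i j
    simp
  smul_mem' := by
    intro c x hx i j
    simp only [Pi.smul_apply, smul_eq_mul, hx i j]
    ring

/-- The subspace `Sing V ⊆ V` of singular vectors:
`{∑_{i<j} c_{i,j} F_{i,j} : ∑_{j<i} a_j c_{j,i} − ∑_{j>i} a_j c_{i,j} = 0 for every i}`. -/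
noncomputable def singV2 (n : ℕ) (a : Fin n → ℂ) : Submodule ℂ (Fin n → Fin n → ℂ) where
  carrier := {x | (∀ i j, x j i = -x i j) ∧ ∀ i,
    (∑ j ∈ Finset.univ.filter (fun j => j < i), a j * x j i) -
      (∑ j ∈ Finset.univ.filter (fun j => i < j), a j * x i j) = 0}
  add_mem' := by
    intro x y hx hy
    refine ⟨fun i j => ?_, fun i => ?_⟩
    · simp only [Pi.add_apply, hx.1 i j, hy.1 i j]; ring
    · have h1 := hx.2 i
      have h2 := hy.2 i
      simp only [Pi.add_apply, mul_add, Finset.sum_add_distrib]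
      linear_combination h1 + h2
  zero_mem' := by
    constructor
    · intro i j; simp
    · intro i; simp
  smul_mem' := by
    intro c x hx
    refine ⟨fun i j => ?_, fun i => ?_⟩
    · simp only [Pi.smul_apply, smul_eq_mul, hx.1 i j]; ring
    · have h := hx.2 i
      simp only [Pi.smul_apply, smul_eq_mul]
      have e1 : ∑ j ∈ Finset.univ.filter (fun j => j < i), a j * (c * x j i) =
          c * ∑ j ∈ Finset.univ.filter (fun j => j < i), a j * x j i := by
        rw [Finset.mul_sum]; exact Finset.sum_congr rfl fun j _ => by ring
      have e2 : ∑ j ∈ Finset.univ.filter (fun j => i < j), a j * (c * x i j) =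
          c * ∑ j ∈ Finset.univ.filter (fun j => i < j), a j * x i j := by
        rw [Finset.mul_sum]; exact Finset.sum_congr rfl fun j _ => by ring
      rw [e1, e2]
      linear_combination c * h

/-- The vector `v_{i,j} = F_{i,j} − (a_j/|a|) ∑_k F_{i,k} − (a_i/|a|) ∑_ℓ F_{ℓ,j}`
(for `i ≠ j`), and `v_{i,i} = 0`. -/
noncomputable def vv2 {n : ℕ} (a : Fin n → ℂ) (i j : Fin n) : Fin n → Fin n → ℂ :=
  if i = j then 0 else
    F2 n i j - (a j / ∑ m, a m) • (∑ k, F2 n i k) - (a i / ∑ m, a m) • (∑ l, F2 n l j)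

/-- The contravariant form `S^{(a)}` with `S^{(a)}(F_{i,j}, F_{i,j}) = a_i a_j` for `i < j`
and distinct basis vectors orthogonal, written on coordinates. -/
noncomputable def S2 {n : ℕ} (a : Fin n → ℂ) (x y : Fin n → Fin n → ℂ) : ℂ :=
  ∑ i, ∑ j ∈ Finset.univ.filter (fun j => i < j), a i * a j * x i j * y i j

/-- The operator `L_{i,j,k}` sending each of `F_{i,j}, F_{j,k}, F_{k,i}` to
`a_k F_{i,j} + a_i F_{j,k} + a_j F_{k,i}` and killing `F_{ℓ,m}` with `{ℓ,m} ⊄ {i,j,k}`. -/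
noncomputable def L2 {n : ℕ} (a : Fin n → ℂ) (i j k : Fin n) :
    (Fin n → Fin n → ℂ) →ₗ[ℂ] (Fin n → Fin n → ℂ) where
  toFun x := (x i j + x j k + x k i) •
    (a k • F2 n i j + a i • F2 n j k + a j • F2 n k i)
  map_add' x y := by
    simp only [Pi.add_apply]
    rw [← add_smul]
    congr 1
    ring
  map_smul' c x := by
    simp only [Pi.smul_apply, smul_eq_mul, RingHom.id_apply]
    rw [smul_smul]
    congr 1
    ring

/-- The operator `K_i(z) = ∑_{{j,k} ⊆ {1,…,n}∖{i}} (d_{j,k}/f_{i,j,k}(z)) L_{i,j,k}`,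
the sum over unordered pairs `{j,k}` realized by `j < k`. -/
noncomputable def K2 {n : ℕ} (a : Fin n → ℂ) (b : Fin n → Fin 2 → ℂ) (z : Fin n → ℂ)
    (i : Fin n) : (Fin n → Fin n → ℂ) →ₗ[ℂ] (Fin n → Fin n → ℂ) :=
  ∑ j ∈ Finset.univ.erase i, ∑ k ∈ Finset.univ.filter (fun k => j < k ∧ k ≠ i),
    (dd2 b j k / ff2 b z i j k) • L2 a i j k

lemma F2_swap {n : ℕ} (i j : Fin n) : F2 n j i = -F2 n i j := by
  funext k l
  simp only [F2, Pi.neg_apply]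
  ring

lemma F2_self {n : ℕ} (i : Fin n) : F2 n i i = 0 := by
  funext k l
  simp [F2]

lemma sum_sum_F2 (n : ℕ) : ∑ i : Fin n, ∑ k, F2 n i k = 0 := by
  funext p q
  simp [F2, Finset.sum_apply, Finset.sum_sub_distrib, ite_and]

lemma vv2_eq {n : ℕ} (a : Fin n → ℂ) (i j : Fin n) :
    vv2 a i j = F2 n i j - (a j / ∑ m, a m) • (∑ k, F2 n i k)
      + (a i / ∑ m, a m) • (∑ k, F2 n j k) := by
  have hcol : ∑ l, F2 n l j = -∑ k, F2 n j k := by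
    rw [← Finset.sum_neg_distrib]
    exact Finset.sum_congr rfl fun l _ => F2_swap j l
  rcases eq_or_ne i j with rfl | h
  · rw [vv2, if_pos rfl, F2_self]
    abel
  · rw [vv2, if_neg h, hcol, smul_neg, sub_neg_eq_add]

lemma vv2_swap {n : ℕ} (a : Fin n → ℂ) (i j : Fin n) : vv2 a j i = -vv2 a i j := by
  rw [vv2_eq, vv2_eq, F2_swap]
  abel

lemma sum_vv2_right {n : ℕ} (a : Fin n → ℂ) (hA : ∑ j, a j ≠ 0) (i : Fin n) :
    ∑ j, vv2 a i j = 0 := by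
  have hsum : ∑ j, a j / ∑ m, a m = 1 := by rw [← Finset.sum_div, div_self hA]
  simp only [vv2_eq, Finset.sum_add_distrib, Finset.sum_sub_distrib, ← Finset.sum_smul,
    ← Finset.smul_sum, sum_sum_F2, hsum, one_smul, sub_self, smul_zero, add_zero]

lemma sum_vv2_left {n : ℕ} (a : Fin n → ℂ) (hA : ∑ j, a j ≠ 0) (j : Fin n) :
    ∑ i, vv2 a i j = 0 := by
  simp only [vv2_swap a j, Finset.sum_neg_distrib, sum_vv2_right a hA, neg_zero]

lemma two_nsmul_sum_filter_lt {ι M : Type*} [Fintype ι] [LinearOrder ι] [AddCommMonoid M]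
    (w : ι → ι → M) (hw : ∀ i j, w j i = w i j) (hdiag : ∀ i, w i i = 0) :
    2 • ∑ i, ∑ j ∈ univ.filter (fun j => i < j), w i j = ∑ i, ∑ j, w i j := by
  have hsplit : ∀ i j, w i j = (if i < j then w i j else 0) + (if j < i then w j i else 0) := by
    intro i j
    rcases lt_trichotomy i j with h | rfl | h
    · simp [h, h.not_gt]
    · simp [hdiag]
    · simp [h, h.not_gt, hw]
  simp only [Finset.sum_filter, two_nsmul]
  conv_rhs => rw [Finset.sum_congr rfl fun i _ => Finset.sum_congr rfl fun j _ => hsplit i j]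
  rw [Finset.sum_congr rfl fun i _ => Finset.sum_add_distrib, Finset.sum_add_distrib]
  congr 1
  exact Finset.sum_comm

lemma sum_filter_lt_sub_smul_vv2 {n : ℕ} (a : Fin n → ℂ) (hA : ∑ j, a j ≠ 0) (u : Fin n → ℂ) :
    ∑ i, ∑ j ∈ univ.filter (fun j => i < j), (u i - u j) • vv2 a i j = 0 := by
  have hsymm : ∀ i j, (u j - u i) • vv2 a j i = (u i - u j) • vv2 a i j := fun i j => by
    rw [vv2_swap, smul_neg, ← neg_smul, neg_sub]
  have htwice : 2 • ∑ i, ∑ j ∈ univ.filter (fun j => i < j), (u i - u j) • vv2 a i j = 0 := by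
    rw [two_nsmul_sum_filter_lt _ hsymm (fun i => by rw [sub_self, zero_smul])]
    simp only [sub_smul, Finset.sum_sub_distrib]
    rw [Finset.sum_comm (f := fun i j => u j • vv2 a i j)]
    simp only [← Finset.smul_sum, sum_vv2_right a hA, sum_vv2_left a hA, smul_zero,
      Finset.sum_const_zero, sub_zero]
  exact (smul_eq_zero.mp htwice).resolve_left two_ne_zero

lemma dd2_swap {n : ℕ} (b : Fin n → Fin 2 → ℂ) (i j : Fin n) : dd2 b j i = -dd2 b i j := by
  simp only [dd2]
  ring

noncomputable def pairCoeff {n : ℕ} (b : Fin n → Fin 2 → ℂ) (z : Fin n → ℂ) (i j : Fin n) : ℂ :=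
  (z i * b j 0 - z j * b i 0) ^ 2 / (dd2 b i j * b i 0 * b j 0)

lemma pairCoeff_self {n : ℕ} (b : Fin n → Fin 2 → ℂ) (z : Fin n → ℂ) (i : Fin n) :
    pairCoeff b z i i = 0 := by
  simp [pairCoeff]

lemma pairCoeff_swap {n : ℕ} (b : Fin n → Fin 2 → ℂ) (z : Fin n → ℂ) (i j : Fin n) :
    pairCoeff b z j i = -pairCoeff b z i j := by
  rw [pairCoeff, pairCoeff, dd2_swap, ← div_neg]
  congr 1 <;> ring

/-- In the coordinates `x_i = z_i / b_i^1`, `t_i = b_i^2 / b_i^1` one has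
`pairCoeff b z i j = (x_i - x_j)² / (t_j - t_i)`, and this is a partial-fraction identity in the
`t`'s. -/
lemma ff2_sq_div_eq {n : ℕ} (b : Fin n → Fin 2 → ℂ) (z : Fin n → ℂ) {i j m : Fin n}
    (hij : dd2 b i j ≠ 0) (him : dd2 b i m ≠ 0) (hjm : dd2 b j m ≠ 0)
    (hi : b i 0 ≠ 0) (hj : b j 0 ≠ 0) (hm : b m 0 ≠ 0) :
    ff2 b z i j m ^ 2 / (dd2 b i j * dd2 b j m * dd2 b m i) =
      pairCoeff b z i m - pairCoeff b z j m - pairCoeff b z i j := by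
  rw [dd2_swap b i m]
  unfold pairCoeff
  field_simp
  simp only [ff2, dd2]
  ring

lemma pairCoeff_add_ite_eq {n : ℕ} (b : Fin n → Fin 2 → ℂ) (z : Fin n → ℂ)
    (hd : ∀ i j : Fin n, i ≠ j → dd2 b i j ≠ 0) (hb1 : ∀ i, b i 0 ≠ 0) (m : Fin n)
    {i j : Fin n} (hij : i ≠ j) :
    pairCoeff b z i j + (if i ≠ m ∧ j ≠ m then
        ff2 b z i j m ^ 2 / (dd2 b i j * dd2 b j m * dd2 b m i) else 0) =
      pairCoeff b z i m - pairCoeff b z j m := by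
  by_cases hm : i ≠ m ∧ j ≠ m
  · rw [if_pos hm, ff2_sq_div_eq b z (hd i j hij) (hd i m hm.1) (hd j m hm.2) (hb1 i) (hb1 j)
      (hb1 m)]
    ring
  · rw [if_neg hm, add_zero]
    rcases not_and_or.mp hm with him | hjm
    · rw [not_not.mp him, pairCoeff_self, zero_sub, pairCoeff_swap]
    · rw [not_not.mp hjm, pairCoeff_self, sub_zero]

theorem stmt_13_general (n : ℕ) (b : Fin n → Fin 2 → ℂ)
    (hd : ∀ i j : Fin n, i ≠ j → dd2 b i j ≠ 0)
    (a : Fin n → ℂ) (hA : (∑ j, a j) ≠ 0)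
    (hb1 : ∀ i, b i 0 ≠ 0) (m : Fin n) (z : Fin n → ℂ) :
    -(∑ i, ∑ j ∈ Finset.univ.filter (fun j => i < j),
        ((z i * b j 0 - z j * b i 0) ^ 2 / (dd2 b i j * b i 0 * b j 0)) • vv2 a i j) =
      ∑ i, ∑ j ∈ Finset.univ.filter (fun j => i < j ∧ i ≠ m ∧ j ≠ m),
        (ff2 b z i j m ^ 2 / (dd2 b i j * dd2 b j m * dd2 b m i)) • vv2 a i j := by
  refine neg_eq_of_add_eq_zero_right ?_
  rw [← sum_filter_lt_sub_smul_vv2 a hA (fun i => pairCoeff b z i m), ← Finset.sum_add_distrib]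
  refine Finset.sum_congr rfl fun i _ => ?_
  simp only [Finset.sum_filter, ← Finset.sum_add_distrib]
  refine Finset.sum_congr rfl fun j _ => ?_
  by_cases hij : i < j
  · have hcoeff := pairCoeff_add_ite_eq b z hd hb1 m hij.ne
    rw [if_pos hij, if_pos hij, ← hcoeff, add_smul]
    by_cases hm : i ≠ m ∧ j ≠ m
    · rw [if_pos ⟨hij, hm⟩, if_pos hm]
      rfl
    · rw [if_neg fun h => hm h.2, if_neg hm, zero_smul]
      rfl
  · rw [if_neg hij, if_neg fun h => hij h.1, if_neg hij, add_zero]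

/-- If moreover `b_i^1 ≠ 0` for all `i`, then for every `m` and `z`:
`−∑_{i<j} ((z_i b_j^1 − z_j b_i^1)²/(d_{i,j} b_i^1 b_j^1)) v_{i,j}
 = ∑'_{i<j, m∉{i,j}} (f_{i,j,m}(z)²/(d_{i,j} d_{j,m} d_{m,i})) v_{i,j}`;
in particular the right-hand side does not depend on `m`. -/
theorem stmt_13 (n : ℕ) (hn : 3 ≤ n) (b : Fin n → Fin 2 → ℂ)
    (hd : ∀ i j : Fin n, i ≠ j → dd2 b i j ≠ 0)
    (a : Fin n → ℂ) (ha : ∀ j, a j ≠ 0) (hA : (∑ j, a j) ≠ 0)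
    (hb1 : ∀ i, b i 0 ≠ 0) (m : Fin n) (z : Fin n → ℂ) :
    -(∑ i, ∑ j ∈ Finset.univ.filter (fun j => i < j),
        ((z i * b j 0 - z j * b i 0) ^ 2 / (dd2 b i j * b i 0 * b j 0)) • vv2 a i j) =
      ∑ i, ∑ j ∈ Finset.univ.filter (fun j => i < j ∧ i ≠ m ∧ j ≠ m),
        (ff2 b z i j m ^ 2 / (dd2 b i j * dd2 b j m * dd2 b m i)) • vv2 a i j :=
  stmt_13_general n b hd a hA hb1 m z
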